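/- arXiv:1408.2951 — 2 statements merged into one kernel-verified Lean document; each statement's English description precedes it below -/
import Mathlib

section
/- Let n, m be integers with n > m ≥ 1 and let ε > 0. Define f : ℝ^{n×m} → ℝ by f(M) = det(MᵀM + εI_m)^{−(n−m−1)/2} and write K = MᵀM + εI_m. Then for every column index a ∈ {1,…,m} and every M ∈ ℝ^{n×m}, Σ_{i=1}^n ∂²f/∂M_{ia}²(M) = −(n−m−1) ε f(M) [ (n−m) Σ_{b=1}^m ((K⁻¹)_{ab})² + (K⁻¹)_{aa} tr(K⁻¹) ]. In particular, if n − m ≥ 2 this quantity is strictly negative, so f is superharmonic as a function of each single column of M with the other columns held fixed. -/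
/-!
Write `K = MᵀM + εI`. Moving the entry `(i, a)` of `M` by `t` perturbs `K` by a symmetric matrix
of rank two, so the matrix determinant lemma gives `det K(t) = det K · (1 + 2αt + ct²)` with
`α = (MK⁻¹)ᵢₐ` and `c = α² + (K⁻¹)ₐₐ (1 - (MK⁻¹Mᵀ)ᵢᵢ)`. Hence the second derivative of
`(det K)^P` in that entry is `(det K)^P (4P(P - 1)α² + 2Pc)`. Summing over `i` and using
`MᵀM = K - εI` gives `∑ᵢ αᵢ² = (K⁻¹)ₐₐ - ε (K⁻²)ₐₐ` and `∑ᵢ (MK⁻¹Mᵀ)ᵢᵢ = m - ε tr K⁻¹`;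
for `P = -(n - m - 1)/2` the terms in `(K⁻¹)ₐₐ` without a factor `ε` cancel.
-/

open Matrix

/-- The second partial derivative of `f` with respect to the `(i,a)` entry, at `M`. -/
noncomputable def matSecondPartial {n m : ℕ} (f : Matrix (Fin n) (Fin m) ℝ → ℝ)
    (M : Matrix (Fin n) (Fin m) ℝ) (i : Fin n) (a : Fin m) : ℝ :=
  iteratedDeriv 2 (fun t : ℝ => f (M + t • Matrix.single i a 1)) 0

theorem iteratedDeriv_two_rpow_quadratic {α c P : ℝ}
    (hq : ∀ t : ℝ, 0 < 1 + 2 * α * t + c * t ^ 2) :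
    iteratedDeriv 2 (fun t => (1 + 2 * α * t + c * t ^ 2) ^ P) 0 =
      4 * P * (P - 1) * α ^ 2 + 2 * P * c := by
  set q : ℝ → ℝ := fun t => 1 + 2 * α * t + c * t ^ 2
  have hq' : ∀ t, HasDerivAt q (2 * α + 2 * c * t) t := fun t => by
    refine ((((hasDerivAt_id t).const_mul (2 * α)).const_add 1).add
      ((hasDerivAt_pow 2 t).const_mul c)).congr_deriv ?_
    simp only [Nat.cast_ofNat]
    ring
  have hd : deriv (fun t => q t ^ P) = fun t => (2 * α + 2 * c * t) * P * q t ^ (P - 1) :=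
    funext fun t => ((hq' t).rpow_const (Or.inl (hq t).ne')).deriv
  have hd' : HasDerivAt (fun t => (2 * α + 2 * c * t) * P * q t ^ (P - 1))
      (2 * c * P * q 0 ^ (P - 1)
        + (2 * α + 2 * c * 0) * P * ((2 * α + 2 * c * 0) * (P - 1) * q 0 ^ (P - 1 - 1))) 0 := by
    have hlin : HasDerivAt (fun t : ℝ => (2 * α + 2 * c * t) * P) (2 * c * P) 0 := by
      simpa using (((hasDerivAt_id (0 : ℝ)).const_mul (2 * c)).const_add (2 * α)).mul_const P
    exact hlin.mul ((hq' 0).rpow_const (Or.inl (hq 0).ne'))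
  rw [iteratedDeriv_succ, iteratedDeriv_one, hd, hd'.deriv]
  simp only [q]
  norm_num
  ring

section

variable {m n : Type*} [Fintype n]

theorem transpose_mul_self_add_smul_vecMulVec (M : Matrix n m ℝ) (x : n → ℝ) (y : m → ℝ)
    (t : ℝ) :
    (M + t • vecMulVec x y)ᵀ * (M + t • vecMulVec x y) =
      Mᵀ * M + t • (vecMulVec y (x ᵥ* M) + vecMulVec (x ᵥ* M) y)
        + (t ^ 2 * (x ⬝ᵥ x)) • vecMulVec y y := by
  simp only [transpose_add, transpose_smul, transpose_vecMulVec, Matrix.add_mul, Matrix.mul_add,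
    Matrix.smul_mul, Matrix.mul_smul]
  simp only [mul_vecMulVec, vecMulVec_mul, vecMulVec_mulVec, op_smul_eq_smul, smul_vecMulVec,
    mulVec_transpose]
  module

variable [DecidableEq m]

theorem isSymm_transpose_mul_self_add_smul_one (M : Matrix n m ℝ) (ε : ℝ) :
    (Mᵀ * M + ε • (1 : Matrix m m ℝ)).IsSymm := by
  rw [IsSymm, transpose_add, transpose_mul, transpose_transpose, transpose_smul, transpose_one]

variable [Fintype m]

theorem det_add_smul_symm_vecMulVec {K : Matrix m m ℝ} (hKu : IsUnit K.det) (hK : K.IsSymm)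
    (y w : m → ℝ) (s t : ℝ) :
    (K + t • (vecMulVec y w + vecMulVec w y) + (t ^ 2 * s) • vecMulVec y y).det =
      K.det * (1 + 2 * (w ⬝ᵥ K⁻¹ *ᵥ y) * t
        + ((w ⬝ᵥ K⁻¹ *ᵥ y) ^ 2 + (y ⬝ᵥ K⁻¹ *ᵥ y) * (s - w ⬝ᵥ K⁻¹ *ᵥ w)) * t ^ 2) := by
  have hvec : ∀ v, v ᵥ* K⁻¹ = K⁻¹ *ᵥ v := fun v => by
    rw [← mulVec_transpose, hK.inv.eq]
  have hsymm : y ⬝ᵥ K⁻¹ *ᵥ w = w ⬝ᵥ K⁻¹ *ᵥ y := by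
    rw [dotProduct_mulVec, hvec, dotProduct_comm]
  have hcomm : ∀ u v, K⁻¹ *ᵥ u ⬝ᵥ v = v ⬝ᵥ K⁻¹ *ᵥ u := fun _ _ => dotProduct_comm _ _
  have hUV : t • (vecMulVec y w + vecMulVec w y) + (t ^ 2 * s) • vecMulVec y y =
      (of ![y, t • w])ᵀ * of ![t • w + (t ^ 2 * s) • y, y] := by
    ext b c
    simp [mul_apply, Fin.sum_univ_two, vecMulVec_apply]
    ring
  rw [add_assoc, hUV, det_add_mul _ _ hKu, det_fin_two]
  congr 1
  simp [hvec, vecMul_transpose, mulVec_add, mulVec_smul, hcomm, hsymm]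
  ring

theorem posDef_transpose_mul_self_add_smul_one (M : Matrix n m ℝ) {ε : ℝ} (hε : 0 < ε) :
    (Mᵀ * M + ε • (1 : Matrix m m ℝ)).PosDef :=
  PosDef.posSemidef_add (posSemidef_conjTranspose_mul_self M) (PosDef.one.smul hε)

theorem sum_sq_mul_inv_apply (M : Matrix n m ℝ) {ε : ℝ} {K : Matrix m m ℝ}
    (hK : Mᵀ * M + ε • 1 = K) (hKu : IsUnit K.det) (a : m) :
    ∑ i, (M * K⁻¹) i a ^ 2 = K⁻¹ a a - ε * ∑ b, K⁻¹ a b ^ 2 := by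
  have hsymm : K⁻¹.IsSymm := hK ▸ (isSymm_transpose_mul_self_add_smul_one M ε).inv
  have hgram : (M * K⁻¹)ᵀ * (M * K⁻¹) = K⁻¹ - ε • (K⁻¹ * K⁻¹) := by
    rw [transpose_mul, hsymm.eq, Matrix.mul_assoc, ← Matrix.mul_assoc Mᵀ, eq_sub_of_add_eq hK,
      Matrix.sub_mul, Matrix.mul_sub, mul_nonsing_inv _ hKu, Matrix.mul_one, Matrix.smul_mul,
      Matrix.one_mul, Matrix.mul_smul]
  calc ∑ i, (M * K⁻¹) i a ^ 2 = ((M * K⁻¹)ᵀ * (M * K⁻¹)) a a := by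
        simp only [mul_apply, transpose_apply, sq]
    _ = K⁻¹ a a - ε * ∑ b, K⁻¹ a b * K⁻¹ b a := by
        rw [hgram, Matrix.sub_apply, Matrix.smul_apply, smul_eq_mul, mul_apply]
    _ = K⁻¹ a a - ε * ∑ b, K⁻¹ a b ^ 2 := by
        simp only [hsymm.apply a, sq]

theorem trace_mul_inv_mul_transpose (M : Matrix n m ℝ) {ε : ℝ} {K : Matrix m m ℝ}
    (hK : Mᵀ * M + ε • 1 = K) (hKu : IsUnit K.det) :
    (M * K⁻¹ * Mᵀ).trace = Fintype.card m - ε * K⁻¹.trace := by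
  rw [trace_mul_comm, ← Matrix.mul_assoc, eq_sub_of_add_eq hK, Matrix.sub_mul,
    mul_nonsing_inv _ hKu, trace_sub, trace_one, Matrix.smul_mul, Matrix.one_mul, trace_smul,
    smul_eq_mul]

variable [DecidableEq n]

theorem det_transpose_mul_self_add_smul_single (M : Matrix n m ℝ) {ε : ℝ} (hε : 0 < ε)
    {K : Matrix m m ℝ} (hK : Mᵀ * M + ε • 1 = K) (i : n) (a : m) (t : ℝ) :
    ((M + t • single i a 1)ᵀ * (M + t • single i a 1) + ε • 1).det =
      K.det * (1 + 2 * (M * K⁻¹) i a * t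
        + ((M * K⁻¹) i a ^ 2 + K⁻¹ a a * (1 - (M * K⁻¹ * Mᵀ) i i)) * t ^ 2) := by
  have hgram : (M + t • single i a 1)ᵀ * (M + t • single i a 1) + ε • 1 =
      K + t • (vecMulVec (Pi.single a 1) (M i) + vecMulVec (M i) (Pi.single a 1))
        + (t ^ 2 * 1) • vecMulVec (Pi.single a 1) (Pi.single a 1) := by
    rw [single_eq_single_vecMulVec_single, transpose_mul_self_add_smul_vecMulVec,
      single_one_vecMul, single_dotProduct, Pi.single_eq_same, ← hK]
    simp only [mul_one, row]
    abel
  have hα : M i ⬝ᵥ K⁻¹ *ᵥ Pi.single a 1 = (M * K⁻¹) i a := by rw [mulVec_single_one]; rfl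
  have hβ : M i ⬝ᵥ K⁻¹ *ᵥ M i = (M * K⁻¹ * Mᵀ) i i := by rw [dotProduct_mulVec]; rfl
  have hγ : Pi.single a 1 ⬝ᵥ K⁻¹ *ᵥ Pi.single a 1 = K⁻¹ a a := by simp
  have hKu : IsUnit K.det := hK ▸ (posDef_transpose_mul_self_add_smul_one M hε).det_pos.ne'.isUnit
  have hKs : K.IsSymm := hK ▸ isSymm_transpose_mul_self_add_smul_one M ε
  rw [hgram, det_add_smul_symm_vecMulVec hKu hKs, hα, hβ, hγ]

theorem iteratedDeriv_two_det_rpow_single (M : Matrix n m ℝ) {ε : ℝ} (hε : 0 < ε)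
    {K : Matrix m m ℝ} (hK : Mᵀ * M + ε • 1 = K) (i : n) (a : m) (P : ℝ) :
    iteratedDeriv 2
        (fun t : ℝ => ((M + t • single i a 1)ᵀ * (M + t • single i a 1) + ε • 1).det ^ P) 0 =
      K.det ^ P * (4 * P * (P - 1) * (M * K⁻¹) i a ^ 2
        + 2 * P * ((M * K⁻¹) i a ^ 2 + K⁻¹ a a * (1 - (M * K⁻¹ * Mᵀ) i i))) := by
  set α := (M * K⁻¹) i a
  set c := (M * K⁻¹) i a ^ 2 + K⁻¹ a a * (1 - (M * K⁻¹ * Mᵀ) i i)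
  have hD : 0 < K.det := hK ▸ (posDef_transpose_mul_self_add_smul_one M hε).det_pos
  have hq : ∀ t : ℝ, 0 < 1 + 2 * α * t + c * t ^ 2 := fun t => by
    have h := (posDef_transpose_mul_self_add_smul_one (M + t • single i a 1) hε).det_pos
    rw [det_transpose_mul_self_add_smul_single M hε hK] at h
    exact pos_of_mul_pos_right h hD.le
  have hfun : (fun t : ℝ => ((M + t • single i a 1)ᵀ * (M + t • single i a 1) + ε • 1).det ^ P) =
      fun t => K.det ^ P * (1 + 2 * α * t + c * t ^ 2) ^ P := funext fun t => by
    rw [det_transpose_mul_self_add_smul_single M hε hK, Real.mul_rpow hD.le (hq t).le]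
  rw [hfun, iteratedDeriv_const_mul_field, iteratedDeriv_two_rpow_quadratic hq]

theorem sum_iteratedDeriv_two_det_rpow_single (M : Matrix n m ℝ) {ε : ℝ} (hε : 0 < ε)
    {K : Matrix m m ℝ} (hK : Mᵀ * M + ε • 1 = K) (a : m) (P : ℝ) :
    ∑ i, iteratedDeriv 2
        (fun t : ℝ => ((M + t • single i a 1)ᵀ * (M + t • single i a 1) + ε • 1).det ^ P) 0 =
      K.det ^ P * (2 * P * ((2 * P - 1) * (K⁻¹ a a - ε * ∑ b, K⁻¹ a b ^ 2)
        + K⁻¹ a a * (Fintype.card n - Fintype.card m + ε * K⁻¹.trace))) := by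
  have hKu : IsUnit K.det := (hK ▸ (posDef_transpose_mul_self_add_smul_one M hε).det_pos).ne'.isUnit
  have htr : ∑ i, (M * K⁻¹ * Mᵀ) i i = _ := trace_mul_inv_mul_transpose M hK hKu
  simp only [iteratedDeriv_two_det_rpow_single M hε hK, ← Finset.mul_sum]
  congr 1
  calc ∑ i, (4 * P * (P - 1) * (M * K⁻¹) i a ^ 2
          + 2 * P * ((M * K⁻¹) i a ^ 2 + K⁻¹ a a * (1 - (M * K⁻¹ * Mᵀ) i i)))
      = 2 * P * (2 * P - 1) * ∑ i, (M * K⁻¹) i a ^ 2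
          + 2 * P * K⁻¹ a a * (Fintype.card n - ∑ i, (M * K⁻¹ * Mᵀ) i i) := by
        simp only [mul_add, mul_sub, mul_one, Finset.sum_add_distrib, Finset.sum_sub_distrib,
          ← Finset.mul_sum, Finset.sum_const, Finset.card_univ, nsmul_eq_mul]
        ring
    _ = _ := by
        rw [sum_sq_mul_inv_apply M hK hKu, htr]
        ring

end

theorem sum_matSecondPartial_det_rpow {n m : ℕ} {ε : ℝ} (hε : 0 < ε)
    (M : Matrix (Fin n) (Fin m) ℝ) {K : Matrix (Fin m) (Fin m) ℝ} (hK : Mᵀ * M + ε • 1 = K)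
    (a : Fin m) :
    ∑ i, matSecondPartial (fun M => (Mᵀ * M + ε • (1 : Matrix (Fin m) (Fin m) ℝ)).det
        ^ (-((n : ℝ) - m - 1) / 2)) M i a =
      -((n : ℝ) - m - 1) * ε * K.det ^ (-((n : ℝ) - m - 1) / 2) *
        ((n - m) * ∑ b, K⁻¹ a b ^ 2 + K⁻¹ a a * K⁻¹.trace) := by
  have h := sum_iteratedDeriv_two_det_rpow_single M hε hK a (-((n : ℝ) - m - 1) / 2)
  simp only [Fintype.card_fin] at h
  simp only [matSecondPartial, h]
  ring

theorem stmt2_general (n m : ℕ) (ε : ℝ) (hε : 0 < ε)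
    (f : Matrix (Fin n) (Fin m) ℝ → ℝ)
    (hf : f = fun M => ((Mᵀ * M + ε • (1 : Matrix (Fin m) (Fin m) ℝ)).det)
      ^ (-(((n : ℝ) - m - 1)) / 2)) :
    (∀ (a : Fin m) (M : Matrix (Fin n) (Fin m) ℝ),
      ∑ i : Fin n, matSecondPartial f M i a =
        -(((n : ℝ) - m - 1)) * ε * f M *
          (((n : ℝ) - m) *
              (∑ b : Fin m,
                (((Mᵀ * M + ε • (1 : Matrix (Fin m) (Fin m) ℝ))⁻¹) a b) ^ 2) +
            ((Mᵀ * M + ε • (1 : Matrix (Fin m) (Fin m) ℝ))⁻¹) a a *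
              ((Mᵀ * M + ε • (1 : Matrix (Fin m) (Fin m) ℝ))⁻¹).trace)) ∧
    (m + 2 ≤ n → ∀ (a : Fin m) (M : Matrix (Fin n) (Fin m) ℝ),
      ∑ i : Fin n, matSecondPartial f M i a < 0) := by
  subst hf
  refine ⟨fun a M => sum_matSecondPartial_det_rpow hε M rfl a, fun hn a M => ?_⟩
  have hK := posDef_transpose_mul_self_add_smul_one M hε
  rw [sum_matSecondPartial_det_rpow hε M rfl a]
  set K := Mᵀ * M + ε • (1 : Matrix (Fin m) (Fin m) ℝ)
  have : Nonempty (Fin m) := ⟨a⟩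
  have hnm : (m : ℝ) + 2 ≤ n := by exact_mod_cast hn
  have hbracket : 0 < ((n : ℝ) - m) * ∑ b, K⁻¹ a b ^ 2 + K⁻¹ a a * K⁻¹.trace :=
    add_pos_of_nonneg_of_pos (mul_nonneg (by linarith) (Finset.sum_nonneg fun b _ => sq_nonneg _))
      (mul_pos hK.inv.diag_pos hK.inv.trace_pos)
  rw [neg_mul, neg_mul, neg_mul, neg_lt_zero]
  exact mul_pos (mul_pos (mul_pos (by linarith) hε) (Real.rpow_pos_of_pos hK.det_pos _)) hbracket

theorem stmt2 (n m : ℕ) (hm : 1 ≤ m) (hnm : m < n) (ε : ℝ) (hε : 0 < ε)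
    (f : Matrix (Fin n) (Fin m) ℝ → ℝ)
    (hf : f = fun M => ((Mᵀ * M + ε • (1 : Matrix (Fin m) (Fin m) ℝ)).det)
      ^ (-(((n : ℝ) - m - 1)) / 2)) :
    (∀ (a : Fin m) (M : Matrix (Fin n) (Fin m) ℝ),
      ∑ i : Fin n, matSecondPartial f M i a =
        -(((n : ℝ) - m - 1)) * ε * f M *
          (((n : ℝ) - m) *
              (∑ b : Fin m,
                (((Mᵀ * M + ε • (1 : Matrix (Fin m) (Fin m) ℝ))⁻¹) a b) ^ 2) +
            ((Mᵀ * M + ε • (1 : Matrix (Fin m) (Fin m) ℝ))⁻¹) a a *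
              ((Mᵀ * M + ε • (1 : Matrix (Fin m) (Fin m) ℝ))⁻¹).trace)) ∧
    (m + 2 ≤ n → ∀ (a : Fin m) (M : Matrix (Fin n) (Fin m) ℝ),
      ∑ i : Fin n, matSecondPartial f M i a < 0) :=
  stmt2_general n m ε hε f hf
end

section
/- (Theorem 2) Let n, m be integers with m ≥ 1 and n − m ≥ 2. On the open set of matrices M ∈ ℝ^{n×m} of full rank m (equivalently, MᵀM invertible), the function M ↦ det(MᵀM)^{−(n−m−1)/2} is twice continuously differentiable and its Laplacian vanishes: Δ det(MᵀM)^{−(n−m−1)/2} = 0 at every full-rank M. -/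
open Matrix

attribute [local instance] Matrix.frobeniusNormedAddCommGroup Matrix.frobeniusNormedSpace

/-- The Laplacian of `f : ℝ^{n×m} → ℝ`, i.e. the sum of all second partial derivatives
with respect to the entries. -/
noncomputable def matLaplacian {n m : ℕ} (f : Matrix (Fin n) (Fin m) ℝ → ℝ)
    (M : Matrix (Fin n) (Fin m) ℝ) : ℝ :=
  ∑ i : Fin n, ∑ a : Fin m, matSecondPartial f M i a

/-! Along the coordinate line `t ↦ M + t E_{ia}`, the rank-two matrix determinant lemma shows
that `det((M + tE)ᵀ(M + tE)) = g (1 + 2qt + ct²)` with `g = det(MᵀM)`, `q = M⁺_{ai}` and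
`c = (MᵀM)⁻¹_{aa} (1 - (MM⁺)_{ii}) + q²`, where `M⁺ = (MᵀM)⁻¹Mᵀ`. So the second partial of
`det(MᵀM)^α` is explicit, and summing it with `tr(MM⁺) = m` and `∑ᵢ (M⁺_{ai})² = (MᵀM)⁻¹_{aa}` gives
`Δ det(MᵀM)^α = 2α(n - m + 2α - 1) det(MᵀM)^α tr (MᵀM)⁻¹`, which vanishes for `α = -(n-m-1)/2`. -/

open Filter Topology

theorem iteratedDeriv_two_rpow_const {φ φ' : ℝ → ℝ} {φ'' x : ℝ} (α : ℝ)
    (hφ : ∀ᶠ t in 𝓝 x, HasDerivAt φ (φ' t) t) (hφ' : HasDerivAt φ' φ'' x) (hx : 0 < φ x) :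
    iteratedDeriv 2 (fun t => φ t ^ α) x =
      α * (φ'' * φ x + (α - 1) * φ' x ^ 2) * φ x ^ (α - 2) := by
  have hpos : ∀ᶠ t in 𝓝 x, 0 < φ t :=
    hφ.self_of_nhds.continuousAt.eventually (eventually_gt_nhds hx)
  have hderiv : deriv (fun t => φ t ^ α) =ᶠ[𝓝 x] fun t => φ' t * α * φ t ^ (α - 1) := by
    filter_upwards [hφ, hpos] with t ht htpos
    exact (ht.rpow_const (Or.inl htpos.ne')).deriv
  have hsecond : HasDerivAt (fun t => φ' t * α * φ t ^ (α - 1))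
      (φ'' * α * φ x ^ (α - 1) + φ' x * α * (φ' x * (α - 1) * φ x ^ (α - 1 - 1))) x :=
    (hφ'.mul_const α).mul (hφ.self_of_nhds.rpow_const (Or.inl hx.ne'))
  rw [iteratedDeriv_succ, iteratedDeriv_one, hderiv.deriv_eq, hsecond.deriv,
    show α - 1 = (α - 2) + 1 by ring, Real.rpow_add_one hx.ne', show α - 2 + 1 - 1 = α - 2 by ring]
  ring

section RankTwo

variable {ι R : Type*} [Fintype ι] [DecidableEq ι] [CommRing R]

theorem Matrix.det_add_vecMulVec_add_vecMulVec {A : Matrix ι ι R} (hA : IsUnit A.det)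
    (x u y w : ι → R) :
    (A + vecMulVec x u + vecMulVec y w).det =
      A.det * ((1 + u ⬝ᵥ A⁻¹ *ᵥ x) * (1 + w ⬝ᵥ A⁻¹ *ᵥ y) - (u ⬝ᵥ A⁻¹ *ᵥ y) * (w ⬝ᵥ A⁻¹ *ᵥ x)) := by
  have hUV : vecMulVec x u + vecMulVec y w = (of ![x, y])ᵀ * of ![u, w] := by
    ext i j; simp [vecMulVec_apply, mul_apply, Fin.sum_univ_two]
  have hentry : ∀ j k,
      (of ![u, w] * A⁻¹ * (of ![x, y])ᵀ) j k = ![u, w] j ⬝ᵥ A⁻¹ *ᵥ ![x, y] k := by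
    intro j k
    simp only [mul_apply, dotProduct, mulVec, of_apply, transpose_apply, Finset.sum_mul,
      Finset.mul_sum, mul_assoc]
    exact Finset.sum_comm
  rw [add_assoc, hUV, det_add_mul _ _ hA, det_fin_two]
  simp only [add_apply, hentry, one_apply_eq, one_apply_ne (show (0 : Fin 2) ≠ 1 by decide),
    one_apply_ne (show (1 : Fin 2) ≠ 0 by decide), cons_val_zero, cons_val_one, zero_add]

end RankTwo

section PseudoInverse

variable {ι κ R : Type*} [Fintype ι] [Fintype κ] [DecidableEq κ] [CommRing R]

-- For `M` of full column rank this is the Moore–Penrose pseudoinverse.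
noncomputable def Matrix.pseudoInv (M : Matrix ι κ R) : Matrix κ ι R := (Mᵀ * M)⁻¹ * Mᵀ

theorem Matrix.transpose_nonsing_inv_transpose_mul_self (M : Matrix ι κ R) :
    (Mᵀ * M)⁻¹ᵀ = (Mᵀ * M)⁻¹ := by
  rw [transpose_nonsing_inv, transpose_mul, transpose_transpose]

theorem Matrix.pseudoInv_mul_self {M : Matrix ι κ R} (hM : IsUnit (Mᵀ * M).det) :
    M.pseudoInv * M = 1 := by
  rw [pseudoInv, Matrix.mul_assoc, nonsing_inv_mul _ hM]

theorem Matrix.pseudoInv_mul_pseudoInv_transpose {M : Matrix ι κ R} (hM : IsUnit (Mᵀ * M).det) :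
    M.pseudoInv * M.pseudoInvᵀ = (Mᵀ * M)⁻¹ := by
  rw [pseudoInv, transpose_mul, transpose_transpose, transpose_nonsing_inv_transpose_mul_self,
    ← Matrix.mul_assoc, Matrix.mul_assoc _ Mᵀ M, nonsing_inv_mul _ hM, Matrix.one_mul]

theorem Matrix.trace_mul_pseudoInv {M : Matrix ι κ R} (hM : IsUnit (Mᵀ * M).det) :
    (M * M.pseudoInv).trace = Fintype.card κ := by
  rw [trace_mul_comm, pseudoInv_mul_self hM, trace_one]

theorem Matrix.sum_pseudoInv_sq {M : Matrix ι κ R} (hM : IsUnit (Mᵀ * M).det) (a : κ) :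
    ∑ i, M.pseudoInv a i ^ 2 = (Mᵀ * M)⁻¹ a a := by
  rw [← pseudoInv_mul_pseudoInv_transpose hM, mul_apply]
  simp only [transpose_apply, sq]

end PseudoInverse

section CoordinateLine

variable {ι κ R : Type*} [Fintype ι] [DecidableEq ι] [DecidableEq κ] [CommRing R]

theorem Matrix.transpose_mul_self_add_smul_single (M : Matrix ι κ R) (i : ι) (a : κ) (t : R) :
    (M + t • single i a 1)ᵀ * (M + t • single i a 1) =
      Mᵀ * M + vecMulVec (t • M i + t ^ 2 • Pi.single a 1) (Pi.single a 1) +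
        vecMulVec (t • Pi.single a 1) (M i) := by
  ext b c
  simp only [add_apply, mul_apply, transpose_apply, smul_apply, single_apply, vecMulVec_apply,
    Pi.add_apply, Pi.smul_apply, Pi.single_apply, smul_eq_mul]
  by_cases hb : b = a <;> by_cases hc : c = a <;>
    simp [mul_add, add_mul, Finset.sum_add_distrib, hb, hc, Ne.symm] <;> ring

variable [Fintype κ]

theorem Matrix.det_transpose_mul_self_add_smul_single {M : Matrix ι κ R}
    (hM : IsUnit (Mᵀ * M).det) (i : ι) (a : κ) (t : R) :
    ((M + t • single i a 1)ᵀ * (M + t • single i a 1)).det =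
      (Mᵀ * M).det * (1 + 2 * M.pseudoInv a i * t +
        ((Mᵀ * M)⁻¹ a a * (1 - (M * M.pseudoInv) i i) + M.pseudoInv a i ^ 2) * t ^ 2) := by
  have h_inv_row : ((Mᵀ * M)⁻¹ *ᵥ M i) a = M.pseudoInv a i := by
    simp [pseudoInv, mulVec, dotProduct, mul_apply]
  have h_row_inv_col : M i ⬝ᵥ (Mᵀ * M)⁻¹.col a = M.pseudoInv a i := by
    rw [← transpose_nonsing_inv_transpose_mul_self]
    simp [pseudoInv, dotProduct, mul_apply, mul_comm]
  have h_row_inv_row : M i ⬝ᵥ (Mᵀ * M)⁻¹ *ᵥ M i = (M * M.pseudoInv) i i := by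
    simp [pseudoInv, dotProduct, mulVec, mul_apply]
  rw [transpose_mul_self_add_smul_single, det_add_vecMulVec_add_vecMulVec hM]
  simp only [mulVec_add, mulVec_smul, mulVec_single, MulOpposite.op_one, one_smul, dotProduct_add,
    dotProduct_smul, single_dotProduct, one_mul, smul_eq_mul, col_apply]
  rw [h_inv_row, h_row_inv_col, h_row_inv_row]
  ring

end CoordinateLine

section Analysis

variable {ι κ : Type*} [Fintype ι] [Fintype κ] [DecidableEq κ]

theorem Matrix.det_transpose_mul_self_pos {M : Matrix ι κ ℝ} (hM : IsUnit (Mᵀ * M).det) :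
    0 < (Mᵀ * M).det := by
  have hpsd : (Mᵀ * M).PosSemidef := by
    simpa only [conjTranspose_eq_transpose_of_trivial] using posSemidef_conjTranspose_mul_self M
  exact hpsd.det_nonneg.lt_of_ne' hM.ne_zero

theorem contDiff_det_transpose_mul_self {k : WithTop ℕ∞} :
    ContDiff ℝ k fun M : Matrix ι κ ℝ => (Mᵀ * M).det := by
  have hentry : ∀ i j, ContDiff ℝ k fun M : Matrix ι κ ℝ => M i j := fun i j =>
    (entryLinearMap ℝ ℝ i j).toContinuousLinearMap.contDiff
  simp only [det_apply', mul_apply, transpose_apply]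
  exact ContDiff.sum fun σ _ => contDiff_const.mul <| contDiff_prod fun b _ =>
    ContDiff.sum fun j _ => (hentry j (σ b)).mul (hentry j b)

end Analysis

section Laplacian

variable {n m : ℕ}

theorem matSecondPartial_rpow_det_transpose_mul_self {M : Matrix (Fin n) (Fin m) ℝ}
    (hM : IsUnit (Mᵀ * M).det) (α : ℝ) (i : Fin n) (a : Fin m) :
    matSecondPartial (fun M => (Mᵀ * M).det ^ α) M i a =
      2 * α * (Mᵀ * M).det ^ α * ((Mᵀ * M)⁻¹ a a * (1 - (M * M.pseudoInv) i i) +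
        (2 * α - 1) * M.pseudoInv a i ^ 2) := by
  set g := (Mᵀ * M).det
  set q := M.pseudoInv a i
  set c := (Mᵀ * M)⁻¹ a a * (1 - (M * M.pseudoInv) i i) + q ^ 2
  have hg : 0 < g := det_transpose_mul_self_pos hM
  have hφ : ∀ t : ℝ,
      HasDerivAt (fun t => g * (1 + 2 * q * t + c * t ^ 2)) (g * (2 * q + 2 * c * t)) t := by
    intro t
    have := ((((hasDerivAt_id t).const_mul (2 * q)).const_add 1).add
      ((hasDerivAt_pow 2 t).const_mul c)).const_mul g
    exact this.congr_deriv (by push_cast; ring)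
  have hφ' : HasDerivAt (fun t => g * (2 * q + 2 * c * t)) (g * (2 * c)) 0 :=
    ((((hasDerivAt_id (0 : ℝ)).const_mul (2 * c)).const_add (2 * q)).const_mul g).congr_deriv
      (by norm_num)
  simp only [matSecondPartial, det_transpose_mul_self_add_smul_single hM]
  rw [iteratedDeriv_two_rpow_const α (.of_forall hφ) hφ' (by simpa using hg)]
  simp only [ne_eq, OfNat.ofNat_ne_zero, not_false_eq_true, zero_pow, mul_zero, add_zero, mul_one]
  rw [Real.rpow_sub hg, Real.rpow_two]
  field_simp
  ring

theorem matLaplacian_rpow_det_transpose_mul_self {M : Matrix (Fin n) (Fin m) ℝ}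
    (hM : IsUnit (Mᵀ * M).det) (α : ℝ) :
    matLaplacian (fun M => (Mᵀ * M).det ^ α) M =
      2 * α * (n - m + 2 * α - 1) * (Mᵀ * M).det ^ α * ((Mᵀ * M)⁻¹).trace := by
  have htrace := trace_mul_pseudoInv hM
  simp only [trace, diag_apply, Fintype.card_fin] at htrace ⊢
  simp only [matLaplacian, matSecondPartial_rpow_det_transpose_mul_self hM]
  rw [Finset.sum_comm, Finset.mul_sum]
  refine Finset.sum_congr rfl fun a _ => ?_
  rw [← Finset.mul_sum, Finset.sum_add_distrib, ← Finset.mul_sum, ← Finset.mul_sum,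
    Finset.sum_sub_distrib, htrace, sum_pseudoInv_sq hM]
  simp only [Finset.sum_const, Finset.card_univ, Fintype.card_fin, nsmul_eq_mul, mul_one]
  ring

end Laplacian

theorem stmt4_general (n m : ℕ)
    (f : Matrix (Fin n) (Fin m) ℝ → ℝ)
    (hf : f = fun M => ((Mᵀ * M).det) ^ (-(((n : ℝ) - m - 1)) / 2)) :
    ContDiffOn ℝ 2 f {M : Matrix (Fin n) (Fin m) ℝ | IsUnit (Mᵀ * M).det} ∧
    ∀ M : Matrix (Fin n) (Fin m) ℝ, IsUnit (Mᵀ * M).det → matLaplacian f M = 0 := by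
  subst hf
  refine ⟨fun M hM => ?_, fun M hM => ?_⟩
  · exact ((Real.contDiffAt_rpow_const_of_ne (det_transpose_mul_self_pos hM).ne').comp M
      contDiff_det_transpose_mul_self.contDiffAt).contDiffWithinAt
  · rw [matLaplacian_rpow_det_transpose_mul_self hM]
    ring

theorem stmt4 (n m : ℕ) (hm : 1 ≤ m) (hnm : m + 2 ≤ n)
    (f : Matrix (Fin n) (Fin m) ℝ → ℝ)
    (hf : f = fun M => ((Mᵀ * M).det) ^ (-(((n : ℝ) - m - 1)) / 2)) :
    ContDiffOn ℝ 2 f {M : Matrix (Fin n) (Fin m) ℝ | IsUnit (Mᵀ * M).det} ∧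
    ∀ M : Matrix (Fin n) (Fin m) ℝ, IsUnit (Mᵀ * M).det → matLaplacian f M = 0 :=
  stmt4_general n m f hf
end
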